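/- arXiv:2008.01317 — 2 statements merged into one kernel-verified Lean document; each statement's English description precedes it below -/
import Mathlib

section
/- The spectrum of A_α(K_{a,b}) with n = a+b consists of: (αn + √(α²n² + 4ab(1−2α)))/2 and (αn − √(α²n² + 4ab(1−2α)))/2 each with multiplicity 1, αa with multiplicity b−1, and αb with multiplicity a−1. -/
open Matrix Polynomial

open scoped Classical in
/-- The real adjacency matrix of a simple graph. -/
noncomputable def adjMat {V : Type*} (G : SimpleGraph V) : Matrix V V ℝ :=
  Matrix.of fun u v => if G.Adj u v then 1 else 0

open scoped Classical in
/-- The diagonal degree matrix of a simple graph. -/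
noncomputable def degMatrix {V : Type*} (G : SimpleGraph V) : Matrix V V ℝ :=
  Matrix.of fun u v => if u = v then ((G.neighborSet u).ncard : ℝ) else 0

/-- `A_α(G) = α D(G) + (1-α) A(G)`. -/
noncomputable def Aalpha {V : Type*} (G : SimpleGraph V) (α : ℝ) : Matrix V V ℝ :=
  α • degMatrix G + (1 - α) • adjMat G

open scoped Classical in
/-- The `M`-coronal `Γ_M(θ) = jᵀ (θ I - M)⁻¹ j`, the sum of the entries of `(θ I - M)⁻¹`. -/
noncomputable def coronal {n : Type*} [Fintype n] (M : Matrix n n ℝ) (θ : ℝ) : ℝ :=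
  ∑ i, ∑ j, (θ • (1 : Matrix n n ℝ) - M)⁻¹ i j

open scoped Classical in
/-- The vertex-edge incidence matrix of a simple graph. -/
noncomputable def incMat {V : Type*} (G : SimpleGraph V) : Matrix V G.edgeSet ℝ :=
  Matrix.of fun u e => if u ∈ (e : Sym2 V) then 1 else 0

/-- The corona `G₁ ∘ G₂`: one copy of `G₁` and one copy of `G₂` for every vertex of `G₁`,
joining vertex `i` of `G₁` to every vertex of the `i`-th copy of `G₂`. -/
def corona {V₁ V₂ : Type*} (G₁ : SimpleGraph V₁) (G₂ : SimpleGraph V₂) :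
    SimpleGraph (V₁ ⊕ V₁ × V₂) where
  Adj x y :=
    match x, y with
    | Sum.inl u, Sum.inl v => G₁.Adj u v
    | Sum.inl u, Sum.inr p => u = p.1
    | Sum.inr p, Sum.inl u => u = p.1
    | Sum.inr p, Sum.inr q => p.1 = q.1 ∧ G₂.Adj p.2 q.2
  symm := by
    constructor
    rintro (u | p) (v | q) h
    · exact G₁.adj_symm h
    · exact h
    · exact h
    · exact ⟨h.1.symm, G₂.adj_symm h.2⟩
  loopless := by
    constructor
    rintro (u | p) h
    · exact G₁.loopless.irrefl u h
    · exact G₂.loopless.irrefl p.2 h.2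

/-- The edge corona `G₁ ◊ G₂`: one copy of `G₁` and one copy of `G₂` for every edge of `G₁`,
joining both endpoints of edge `e` of `G₁` to every vertex of the copy of `G₂` indexed by `e`. -/
def edgeCorona {V₁ V₂ : Type*} (G₁ : SimpleGraph V₁) (G₂ : SimpleGraph V₂) :
    SimpleGraph (V₁ ⊕ (G₁.edgeSet × V₂)) where
  Adj x y :=
    match x, y with
    | Sum.inl u, Sum.inl v => G₁.Adj u v
    | Sum.inl u, Sum.inr p => u ∈ (p.1 : Sym2 V₁)
    | Sum.inr p, Sum.inl u => u ∈ (p.1 : Sym2 V₁)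
    | Sum.inr p, Sum.inr q => p.1 = q.1 ∧ G₂.Adj p.2 q.2
  symm := by
    constructor
    rintro (u | p) (v | q) h
    · exact G₁.adj_symm h
    · exact h
    · exact h
    · exact ⟨h.1.symm, G₂.adj_symm h.2⟩
  loopless := by
    constructor
    rintro (u | p) h
    · exact G₁.loopless.irrefl u h
    · exact G₂.loopless.irrefl p.2 h.2

/-- The `R`-vertex corona `G₁ ⊙ G₂`: the `R`-graph of `G₁` (a new vertex per edge, joined to the
endpoints of that edge) together with one copy of `G₂` for every vertex of `G₁`, joining vertex
`i` of `G₁` to every vertex of the `i`-th copy of `G₂`. -/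
def RvertexCorona {V₁ V₂ : Type*} (G₁ : SimpleGraph V₁) (G₂ : SimpleGraph V₂) :
    SimpleGraph (V₁ ⊕ (G₁.edgeSet ⊕ V₁ × V₂)) where
  Adj x y :=
    match x, y with
    | Sum.inl u, Sum.inl v => G₁.Adj u v
    | Sum.inl u, Sum.inr (Sum.inl e) => u ∈ (e : Sym2 V₁)
    | Sum.inr (Sum.inl e), Sum.inl u => u ∈ (e : Sym2 V₁)
    | Sum.inl u, Sum.inr (Sum.inr p) => u = p.1
    | Sum.inr (Sum.inr p), Sum.inl u => u = p.1
    | Sum.inr (Sum.inr p), Sum.inr (Sum.inr q) => p.1 = q.1 ∧ G₂.Adj p.2 q.2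
    | _, _ => False
  symm := by
    constructor
    rintro (u | (e | p)) (v | (f | q)) h
    all_goals first
      | exact G₁.adj_symm h
      | exact h
      | exact ⟨h.1.symm, G₂.adj_symm h.2⟩
  loopless := by
    constructor
    rintro (u | (e | p)) h
    · exact G₁.loopless.irrefl u h
    · exact h
    · exact G₂.loopless.irrefl p.2 h.2

/-- The `R`-edge corona `G₁ ⊖ G₂`: the `R`-graph of `G₁` (a new vertex per edge, joined to the
endpoints of that edge) together with one copy of `G₂` for every edge of `G₁`, joining the new
vertex of edge `e` to every vertex of the copy of `G₂` indexed by `e`. -/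
def RedgeCorona {V₁ V₂ : Type*} (G₁ : SimpleGraph V₁) (G₂ : SimpleGraph V₂) :
    SimpleGraph (V₁ ⊕ (G₁.edgeSet ⊕ G₁.edgeSet × V₂)) where
  Adj x y :=
    match x, y with
    | Sum.inl u, Sum.inl v => G₁.Adj u v
    | Sum.inl u, Sum.inr (Sum.inl e) => u ∈ (e : Sym2 V₁)
    | Sum.inr (Sum.inl e), Sum.inl u => u ∈ (e : Sym2 V₁)
    | Sum.inr (Sum.inl e), Sum.inr (Sum.inr p) => e = p.1
    | Sum.inr (Sum.inr p), Sum.inr (Sum.inl e) => e = p.1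
    | Sum.inr (Sum.inr p), Sum.inr (Sum.inr q) => p.1 = q.1 ∧ G₂.Adj p.2 q.2
    | _, _ => False
  symm := by
    constructor
    rintro (u | (e | p)) (v | (f | q)) h
    all_goals first
      | exact G₁.adj_symm h
      | exact h
      | exact h.symm
      | exact ⟨h.1.symm, G₂.adj_symm h.2⟩
  loopless := by
    constructor
    rintro (u | (e | p)) h
    · exact G₁.loopless.irrefl u h
    · exact h
    · exact G₂.loopless.irrefl p.2 h.2

/-! With `x = ν - α b`, `y = ν - α a` and `J` the all-ones matrix, `ν I - A_α(K_{a,b})` is the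
block matrix `[[x I, -(1-α) J], [-(1-α) J, y I]]`. For `y ≠ 0` its Schur complement is
`x I - ((1-α)² b / y) J`, and the matrix determinant lemma gives
`det = (x y - (1-α)² a b) x^(a-1) y^(b-1)`. Both sides are polynomial in `y` (and `x`), so the
singular values `x = 0`, `y = 0` follow by continuity. The quadratic factor has discriminant
`α²(a+b)² + 4ab(1-2α) = α²(a-b)² + 4ab(1-α)² ≥ 0`, so it splits over `ℝ`. -/

section

variable {m n : Type*}

theorem allOnes_mul_allOnes {l R : Type*} [Fintype n] [Semiring R] :
    (of fun _ _ => 1 : Matrix m n R) * (of fun _ _ => 1 : Matrix n l R)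
      = (Fintype.card n : R) • of fun _ _ => 1 := by
  ext
  simp [Matrix.mul_apply]

theorem det_smul_one_add_smul_allOnes [Fintype m] [DecidableEq m] [Nonempty m] (x t : ℝ) :
    det (x • (1 : Matrix m m ℝ) + t • of fun _ _ => 1)
      = (x + Fintype.card m * t) * x ^ (Fintype.card m - 1) := by
  suffices (fun x : ℝ => det (x • (1 : Matrix m m ℝ) + t • of fun _ _ => 1))
      = fun x => (x + Fintype.card m * t) * x ^ (Fintype.card m - 1) from congrFun this x
  refine Continuous.ext_on (dense_compl_singleton 0) (by fun_prop) (by fun_prop)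
    fun x (hx : x ≠ 0) => ?_
  have hfactor : x • (1 : Matrix m m ℝ) + t • of (fun _ _ => 1) = x • (1 + (t / x) •
      (of fun _ _ => 1 : Matrix m (Fin 1) ℝ) * (of fun _ _ => 1 : Matrix (Fin 1) m ℝ)) := by
    rw [Matrix.smul_mul, allOnes_mul_allOnes, Fintype.card_unique, Nat.cast_one, one_smul,
      smul_add, smul_smul, mul_div_cancel₀ _ hx]
  obtain ⟨k, hk⟩ := Nat.exists_eq_add_one.mpr (Fintype.card_pos (α := m))
  rw [hfactor, det_smul, det_one_add_mul_comm, Matrix.mul_smul, allOnes_mul_allOnes, det_unique]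
  simp only [Matrix.add_apply, one_apply_eq, Matrix.smul_apply, of_apply, smul_eq_mul, mul_one,
    hk, Nat.add_sub_cancel, pow_succ]
  field_simp

theorem det_fromBlocks_smul_one_smul_allOnes [Fintype m] [Fintype n] [DecidableEq m]
    [DecidableEq n] [Nonempty m] [Nonempty n] (x y c : ℝ) :
    det (fromBlocks (x • 1) (c • of fun _ _ => 1) (c • of fun _ _ => 1) (y • 1) :
        Matrix (m ⊕ n) (m ⊕ n) ℝ)
      = (x * y - c ^ 2 * Fintype.card m * Fintype.card n)
          * x ^ (Fintype.card m - 1) * y ^ (Fintype.card n - 1) := by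
  suffices (fun y : ℝ => det (fromBlocks (x • 1) (c • of fun _ _ => 1) (c • of fun _ _ => 1)
        (y • 1) : Matrix (m ⊕ n) (m ⊕ n) ℝ))
      = fun y => (x * y - c ^ 2 * Fintype.card m * Fintype.card n)
          * x ^ (Fintype.card m - 1) * y ^ (Fintype.card n - 1) from congrFun this y
  refine Continuous.ext_on (dense_compl_singleton 0) (by fun_prop) (by fun_prop)
    fun y (hy : y ≠ 0) => ?_
  let : Invertible (y • 1 : Matrix n n ℝ) :=
    ⟨y⁻¹ • 1, by simp [smul_smul, hy], by simp [smul_smul, hy]⟩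
  have schur : x • 1 - c • (of fun _ _ => 1 : Matrix m n ℝ) * ⅟(y • 1 : Matrix n n ℝ)
      * c • (of fun _ _ => 1 : Matrix n m ℝ)
      = x • 1 + (-(c ^ 2 * Fintype.card n / y)) • (of fun _ _ => 1 : Matrix m m ℝ) := by
    change _ - _ * (y⁻¹ • 1) * _ = _
    simp only [Matrix.smul_mul, Matrix.mul_smul, Matrix.mul_one, allOnes_mul_allOnes]
    module
  obtain ⟨k, hk⟩ := Nat.exists_eq_add_one.mpr (Fintype.card_pos (α := n))
  rw [det_fromBlocks₂₂, schur, det_smul_one_add_smul_allOnes, det_smul, det_one, hk,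
    Nat.add_sub_cancel]
  field_simp
  ring

theorem ncard_neighborSet_completeBipartiteGraph_inl [Fintype n] (v : m) :
    ((completeBipartiteGraph m n).neighborSet (.inl v)).ncard = Fintype.card n := by
  have : (completeBipartiteGraph m n).neighborSet (.inl v) = Set.range Sum.inr := by
    ext (w | w) <;> simp
  rw [this, Set.ncard_range_of_injective Sum.inr_injective, Nat.card_eq_fintype_card]

theorem ncard_neighborSet_completeBipartiteGraph_inr [Fintype m] (w : n) :
    ((completeBipartiteGraph m n).neighborSet (.inr w)).ncard = Fintype.card m := by
  have : (completeBipartiteGraph m n).neighborSet (.inr w) = Set.range Sum.inl := by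
    ext (v | v) <;> simp
  rw [this, Set.ncard_range_of_injective Sum.inl_injective, Nat.card_eq_fintype_card]

theorem Aalpha_completeBipartiteGraph [Fintype m] [Fintype n] [DecidableEq m] [DecidableEq n]
    (α : ℝ) :
    Aalpha (completeBipartiteGraph m n) α
      = fromBlocks ((α * Fintype.card n) • 1) ((1 - α) • of fun _ _ => 1)
          ((1 - α) • of fun _ _ => 1) ((α * Fintype.card m) • 1) := by
  ext (i | i) (j | j) <;>
    simp [Aalpha, degMatrix, adjMat, Matrix.one_apply,
      ncard_neighborSet_completeBipartiteGraph_inl, ncard_neighborSet_completeBipartiteGraph_inr]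

end

theorem Aalpha_spectrum_completeBipartite_general (a b : ℕ) (ha : 1 ≤ a) (hb : 1 ≤ b)
    (α : ℝ) (ν : ℝ) :
    det (ν • (1 : Matrix (Fin a ⊕ Fin b) (Fin a ⊕ Fin b) ℝ)
        - Aalpha (completeBipartiteGraph (Fin a) (Fin b)) α)
      = (ν - (α * (a + b)
            + Real.sqrt (α ^ 2 * ((a : ℝ) + b) ^ 2 + 4 * a * b * (1 - 2 * α))) / 2) *
        (ν - (α * (a + b)
            - Real.sqrt (α ^ 2 * ((a : ℝ) + b) ^ 2 + 4 * a * b * (1 - 2 * α))) / 2) *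
        (ν - α * a) ^ (b - 1) * (ν - α * b) ^ (a - 1) := by
  have : Nonempty (Fin a) := ⟨⟨0, ha⟩⟩
  have : Nonempty (Fin b) := ⟨⟨0, hb⟩⟩
  have hblocks : ν • 1 - Aalpha (completeBipartiteGraph (Fin a) (Fin b)) α
      = fromBlocks ((ν - α * b) • 1) (-(1 - α) • of fun _ _ => 1)
          (-(1 - α) • of fun _ _ => 1) ((ν - α * a) • 1) := by
    rw [Aalpha_completeBipartiteGraph, Fintype.card_fin, Fintype.card_fin, ← fromBlocks_one,
      fromBlocks_smul, sub_eq_add_neg, fromBlocks_neg, fromBlocks_add]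
    congr 1 <;> module
  have hdisc : 0 ≤ α ^ 2 * ((a : ℝ) + b) ^ 2 + 4 * a * b * (1 - 2 * α) := by
    rw [show α ^ 2 * ((a : ℝ) + b) ^ 2 + 4 * a * b * (1 - 2 * α)
      = α ^ 2 * ((a : ℝ) - b) ^ 2 + 4 * a * b * (1 - α) ^ 2 by ring]
    positivity
  rw [hblocks, det_fromBlocks_smul_one_smul_allOnes, Fintype.card_fin, Fintype.card_fin]
  linear_combination
    (1 / 4 * (ν - α * b) ^ (a - 1) * (ν - α * a) ^ (b - 1)) * Real.mul_self_sqrt hdisc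

theorem Aalpha_spectrum_completeBipartite (a b : ℕ) (ha : 1 ≤ a) (hb : 1 ≤ b)
    (α : ℝ) (h0 : 0 ≤ α) (h1 : α ≤ 1) (ν : ℝ) :
    det (ν • (1 : Matrix (Fin a ⊕ Fin b) (Fin a ⊕ Fin b) ℝ)
        - Aalpha (completeBipartiteGraph (Fin a) (Fin b)) α)
      = (ν - (α * (a + b)
            + Real.sqrt (α ^ 2 * ((a : ℝ) + b) ^ 2 + 4 * a * b * (1 - 2 * α))) / 2) *
        (ν - (α * (a + b)
            - Real.sqrt (α ^ 2 * ((a : ℝ) + b) ^ 2 + 4 * a * b * (1 - 2 * α))) / 2) *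
        (ν - α * a) ^ (b - 1) * (ν - α * b) ^ (a - 1) :=
  Aalpha_spectrum_completeBipartite_general a b ha hb α ν
end

section
/- If H is any graph and G₁, G₂ are α-isospectral graphs with equal A_α-coronals Γ_{A_α(G₁)}(ν) = Γ_{A_α(G₂)}(ν) (as rational functions), then H ∘ G₁ and H ∘ G₂ are α-isospectral. -/
open Matrix Polynomial

/-!
Order the vertices of `H ∘ G` as `V(H)` followed by the copies `{w} × V(G)`. Then
`νI - A_α(H ∘ G)` is a block matrix with corner `(ν - α|V(G)|)I - A_α(H)`, off-diagonal blocks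
`(α - 1)(I ⊗ jᵀ)` and its transpose, and diagonal block `I ⊗ ((ν - α)I - A_α(G))`. Taking the Schur
complement of the latter block, for every `ν` with `φ_G(ν - α) ≠ 0` we get
`φ_{H ∘ G}(ν) = φ_G(ν - α) ^ |V(H)| · φ_H(ν - α|V(G)| - (1 - α)² Γ_{A_α(G)}(ν - α))`.
The right-hand side only depends on `φ_G` (which determines `|V(G)|`) and on the coronal, and
two polynomials agreeing off a finite set are equal.
-/

open scoped Kronecker

namespace Matrix

variable {R l m n o : Type*} [CommRing R]

theorem kronecker_sub (A : Matrix l m R) (B₁ B₂ : Matrix n o R) :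
    A ⊗ₖ (B₁ - B₂) = A ⊗ₖ B₁ - A ⊗ₖ B₂ := by
  ext ⟨a, b⟩ ⟨c, d⟩
  simp [mul_sub]

theorem fromBlocks_sub (A A' : Matrix n l R) (B B' : Matrix n m R) (C C' : Matrix o l R)
    (D D' : Matrix o m R) :
    fromBlocks A B C D - fromBlocks A' B' C' D' = fromBlocks (A - A') (B - B') (C - C') (D - D') := by
  simp only [sub_eq_add_neg, fromBlocks_neg, fromBlocks_add]

/-- `I_W ⊗ jᵀ`, with `W × Unit` identified with `W`. -/
def kroneckerOnesRow (W V R : Type*) [DecidableEq W] [Zero R] [One R] : Matrix W (W × V) R :=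
  of fun w p => if w = p.1 then 1 else 0

theorem eval_charpoly_eq_det_smul_one_sub [Fintype n] [DecidableEq n] (M : Matrix n n R) (t : R) :
    M.charpoly.eval t = (t • (1 : Matrix n n R) - M).det := by
  rw [eval_charpoly, smul_one_eq_diagonal, scalar_apply]

variable {W V : Type*} [Fintype W] [Fintype V] [DecidableEq W]

theorem kroneckerOnesRow_mul_one_kronecker_mul_transpose (N : Matrix V V R) :
    kroneckerOnesRow W V R * ((1 : Matrix W W R) ⊗ₖ N) * (kroneckerOnesRow W V R)ᵀ =
      (∑ i, ∑ j, N i j) • 1 := by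
  ext w w'
  simp [kroneckerOnesRow, mul_apply, Fintype.sum_prod_type, one_apply, Finset.sum_comm (γ := V)]

variable [DecidableEq V]

theorem det_fromBlocks_one_kronecker (A : Matrix W W R) (S : Matrix V V R) (t : R)
    (hS : IsUnit S.det) :
    (fromBlocks A (t • kroneckerOnesRow W V R) (t • (kroneckerOnesRow W V R)ᵀ)
        ((1 : Matrix W W R) ⊗ₖ S)).det =
      S.det ^ Fintype.card W * (A - (t ^ 2 * ∑ i, ∑ j, S⁻¹ i j) • 1).det := by
  have : Invertible ((1 : Matrix W W R) ⊗ₖ S) :=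
    invertibleOfIsUnitDet _ (by simpa [det_kronecker] using hS.pow _)
  rw [det_fromBlocks₂₂, invOf_eq_nonsing_inv, inv_kronecker, inv_one, det_kronecker, det_one,
    one_pow, one_mul]
  simp only [Matrix.smul_mul, Matrix.mul_smul, smul_smul,
    kroneckerOnesRow_mul_one_kronecker_mul_transpose, sq, mul_assoc]

end Matrix

theorem coronal_eq_sum_inv {n : Type*} [Fintype n] [DecidableEq n] (M : Matrix n n ℝ) (θ : ℝ) :
    coronal M θ = ∑ i, ∑ j, (θ • (1 : Matrix n n ℝ) - M)⁻¹ i j := by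
  unfold coronal
  congr!

theorem ncard_neighborSet_eq_sum_adjMat {V : Type*} [Fintype V] (G : SimpleGraph V) (u : V) :
    ((G.neighborSet u).ncard : ℝ) = ∑ v, adjMat G u v := by
  classical
  rw [Set.ncard_eq_toFinset_card']
  simp [adjMat, Finset.sum_boole]

theorem adjMat_apply_eq_ite {V : Type*} (G : SimpleGraph V) {u v : V} {P : Prop} [Decidable P]
    (h : G.Adj u v ↔ P) : adjMat G u v = if P then 1 else 0 := by
  simp only [adjMat, of_apply]
  split_ifs <;> simp_all

theorem degMatrix_eq_diagonal {V : Type*} [Fintype V] [DecidableEq V] (G : SimpleGraph V) :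
    degMatrix G = diagonal fun u => ∑ v, adjMat G u v := by
  ext u v
  simp only [degMatrix, of_apply, diagonal_apply, ncard_neighborSet_eq_sum_adjMat]

section Corona

variable {W V : Type*} [DecidableEq W] (H : SimpleGraph W) (G : SimpleGraph V)

theorem adjMat_corona :
    adjMat (corona H G) = fromBlocks (adjMat H) (kroneckerOnesRow W V ℝ)
      (kroneckerOnesRow W V ℝ)ᵀ ((1 : Matrix W W ℝ) ⊗ₖ adjMat G) := by
  ext (u | p) (v | q)
  · rfl
  · exact adjMat_apply_eq_ite _ Iff.rfl
  · exact adjMat_apply_eq_ite _ Iff.rfl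
  · classical
    simp only [fromBlocks_apply₂₂, kroneckerMap_apply, one_apply]
    rw [adjMat_apply_eq_ite _ (Iff.rfl : _ ↔ p.1 = q.1 ∧ G.Adj p.2 q.2),
      adjMat_apply_eq_ite G Iff.rfl]
    simp only [ite_and, ite_mul, one_mul, zero_mul]

variable [Fintype W] [Fintype V] [DecidableEq V]

theorem degMatrix_corona :
    degMatrix (corona H G) = fromBlocks (degMatrix H + (Fintype.card V : ℝ) • 1) 0 0
      ((1 : Matrix W W ℝ) ⊗ₖ (degMatrix G + 1)) := by
  rw [degMatrix_eq_diagonal, degMatrix_eq_diagonal, degMatrix_eq_diagonal, adjMat_corona]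
  ext (u | p) (v | q)
  all_goals simp [Fintype.sum_sum_type, Fintype.sum_prod_type, kroneckerOnesRow, one_apply,
    diagonal_apply, apply_ite Finset.card, Prod.ext_iff]
  all_goals split_ifs <;> simp_all [add_comm]

theorem Aalpha_corona (α : ℝ) :
    Aalpha (corona H G) α = fromBlocks (Aalpha H α + (α * Fintype.card V) • 1)
      ((1 - α) • kroneckerOnesRow W V ℝ) ((1 - α) • (kroneckerOnesRow W V ℝ)ᵀ)
      ((1 : Matrix W W ℝ) ⊗ₖ (Aalpha G α + α • 1)) := by
  simp only [Aalpha, degMatrix_corona, adjMat_corona, fromBlocks_smul, fromBlocks_add,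
    kronecker_add, kronecker_smul, smul_zero, zero_add, one_kronecker_one]
  congr 1 <;> module

theorem smul_one_sub_Aalpha_corona (α x : ℝ) :
    x • 1 - Aalpha (corona H G) α = fromBlocks ((x - α * Fintype.card V) • 1 - Aalpha H α)
      ((α - 1) • kroneckerOnesRow W V ℝ) ((α - 1) • (kroneckerOnesRow W V ℝ)ᵀ)
      ((1 : Matrix W W ℝ) ⊗ₖ ((x - α) • 1 - Aalpha G α)) := by
  rw [Aalpha_corona, ← fromBlocks_one, fromBlocks_smul, fromBlocks_sub, kronecker_sub,
    kronecker_smul, one_kronecker_one, kronecker_add, kronecker_smul, one_kronecker_one]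
  congr 1 <;> module

theorem eval_charpoly_Aalpha_corona {α x : ℝ} (hx : (Aalpha G α).charpoly.eval (x - α) ≠ 0) :
    (Aalpha (corona H G) α).charpoly.eval x =
      (Aalpha G α).charpoly.eval (x - α) ^ Fintype.card W *
        (Aalpha H α).charpoly.eval
          (x - α * Fintype.card V - (1 - α) ^ 2 * coronal (Aalpha G α) (x - α)) := by
  rw [eval_charpoly_eq_det_smul_one_sub] at hx
  simp only [eval_charpoly_eq_det_smul_one_sub, smul_one_sub_Aalpha_corona,
    det_fromBlocks_one_kronecker _ _ _ hx.isUnit, coronal_eq_sum_inv]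
  congr 2
  rw [sub_sq_comm α 1]
  module

end Corona

theorem corona_isospectral_right_general {V₁ V₂ W : Type*} [Fintype V₁] [Fintype V₂] [Fintype W]
    [DecidableEq V₁] [DecidableEq V₂] [DecidableEq W]
    (H : SimpleGraph W) (G₁ : SimpleGraph V₁) (G₂ : SimpleGraph V₂)
    (α : ℝ)
    (hspec : (Aalpha G₁ α).charpoly = (Aalpha G₂ α).charpoly)
    (hcor : ∀ ν : ℝ, coronal (Aalpha G₁ α) ν = coronal (Aalpha G₂ α) ν) :
    (Aalpha (corona H G₁) α).charpoly = (Aalpha (corona H G₂) α).charpoly := by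
  have hcard : Fintype.card V₁ = Fintype.card V₂ := by
    rw [← charpoly_natDegree_eq_dim (Aalpha G₁ α), hspec, charpoly_natDegree_eq_dim]
  have hsingular : {x : ℝ | (Aalpha G₁ α).charpoly.eval (x - α) = 0}.Finite :=
    (finite_setOfPred_isRoot (Aalpha G₁ α).charpoly_monic.ne_zero).preimage
      sub_left_injective.injOn
  refine eq_of_infinite_eval_eq _ _ (hsingular.infinite_compl.mono fun x hx => ?_)
  have hx₂ : (Aalpha G₂ α).charpoly.eval (x - α) ≠ 0 := hspec ▸ hx
  simp only [Set.mem_ofPred_eq, eval_charpoly_Aalpha_corona H G₁ hx,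
    eval_charpoly_Aalpha_corona H G₂ hx₂, hspec, hcard, hcor]

theorem corona_isospectral_right {V₁ V₂ W : Type*} [Fintype V₁] [Fintype V₂] [Fintype W]
    [DecidableEq V₁] [DecidableEq V₂] [DecidableEq W]
    (H : SimpleGraph W) (G₁ : SimpleGraph V₁) (G₂ : SimpleGraph V₂)
    (α : ℝ) (h0 : 0 ≤ α) (h1 : α ≤ 1)
    (hspec : (Aalpha G₁ α).charpoly = (Aalpha G₂ α).charpoly)
    (hcor : ∀ ν : ℝ, coronal (Aalpha G₁ α) ν = coronal (Aalpha G₂ α) ν) :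
    (Aalpha (corona H G₁) α).charpoly = (Aalpha (corona H G₂) α).charpoly :=
  corona_isospectral_right_general H G₁ G₂ α hspec hcor
end
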